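/- arXiv:2502.13050 — 3 statements merged into one kernel-verified Lean document; each statement's English description precedes it below -/
import Mathlib

section
/- Let n ≥ 2. Fix the standard orthogonal complex structure J₀ on ℝ^{2n} (J₀e_{2k-1} = e_{2k}, J₀e_{2k} = -e_{2k-1}), a base point a₀ ∈ S^{2n-1}, and set x₀ = (a₀, -J₀a₀) ∈ Q̃_n. Let σ : S^{2n-1} → Q̃_n be the section σ(a) = (a, -J₀a) and let ι : S(a₀^⊥) → Q̃_n be the fibre inclusion ι(b) = (a₀, b), where S(a₀^⊥) = {b ∈ ℝ^{2n} : ‖b‖ = 1, ⟨a₀,b⟩ = 0} is a (2n-2)-sphere. Then the map π_{2n-1}(S^{2n-1}, a₀) × π_{2n-1}(S(a₀^⊥), -J₀a₀) → π_{2n-1}(Q̃_n, x₀) given by (α, β) ↦ σ_*(α) + ι_*(β) is a group isomorphism. -/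
open scoped Topology RealInnerProductSpace

noncomputable section

/-- The standard orthogonal complex structure on `ℝ^{2n}`:
`J₀ e_{2k-1} = e_{2k}`, `J₀ e_{2k} = -e_{2k-1}` (in 1-indexed notation). -/
def J0 {n : ℕ} (v : EuclideanSpace ℝ (Fin (2 * n))) : EuclideanSpace ℝ (Fin (2 * n)) := WithLp.toLp 2 fun i =>
  if _h : (i : ℕ) % 2 = 0 then -(v ⟨(i : ℕ) + 1, by have := i.isLt; omega⟩)
  else v ⟨(i : ℕ) - 1, by have := i.isLt; omega⟩

def permJfun (n : ℕ) (i : Fin (2 * n)) : Fin (2 * n) :=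
  if _h : (i : ℕ) % 2 = 0 then ⟨(i : ℕ) + 1, by have := i.isLt; omega⟩
  else ⟨(i : ℕ) - 1, by have := i.isLt; omega⟩

lemma permJfun_even {n : ℕ} {i : Fin (2 * n)} (h : (i : ℕ) % 2 = 0) :
    permJfun n i = ⟨(i : ℕ) + 1, by have := i.isLt; omega⟩ := by
  simp only [permJfun]; rw [dif_pos h]

lemma permJfun_odd {n : ℕ} {i : Fin (2 * n)} (h : ¬(i : ℕ) % 2 = 0) :
    permJfun n i = ⟨(i : ℕ) - 1, by have := i.isLt; omega⟩ := by
  simp only [permJfun]; rw [dif_neg h]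

lemma J0_even {n : ℕ} (v : EuclideanSpace ℝ (Fin (2 * n))) {i : Fin (2 * n)}
    (h : (i : ℕ) % 2 = 0) :
    J0 v i = -(v ⟨(i : ℕ) + 1, by have := i.isLt; omega⟩) := by
  simp only [J0, PiLp.toLp_apply]; rw [dif_pos h]

lemma J0_odd {n : ℕ} (v : EuclideanSpace ℝ (Fin (2 * n))) {i : Fin (2 * n)}
    (h : ¬(i : ℕ) % 2 = 0) :
    J0 v i = v ⟨(i : ℕ) - 1, by have := i.isLt; omega⟩ := by
  simp only [J0, PiLp.toLp_apply]; rw [dif_neg h]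

lemma permJfun_involutive (n : ℕ) : Function.Involutive (permJfun n) := by
  intro i
  by_cases h : (i : ℕ) % 2 = 0
  · rw [permJfun_even h, permJfun_odd (show ¬((i : ℕ) + 1) % 2 = 0 by omega)]
    ext; simp
  · rw [permJfun_odd h, permJfun_even (show ((i : ℕ) - 1) % 2 = 0 by omega)]
    ext; simp; omega

lemma J0_continuous {n : ℕ} : Continuous (J0 (n := n)) := by
  refine continuous_induced_rng.2 ?_
  apply continuous_pi
  intro i
  by_cases h : (i : ℕ) % 2 = 0
  · simp only [Function.comp_apply, J0, WithLp.ofLp_toLp, dif_pos h]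
    exact (PiLp.continuous_apply ..).neg
  · simp only [Function.comp_apply, J0, WithLp.ofLp_toLp, dif_neg h]
    exact PiLp.continuous_apply ..

lemma J0_norm {n : ℕ} (v : EuclideanSpace ℝ (Fin (2 * n))) : ‖J0 v‖ = ‖v‖ := by
  rw [EuclideanSpace.norm_eq, EuclideanSpace.norm_eq]
  congr 1
  refine Fintype.sum_equiv ((permJfun_involutive n).toPerm) _ _ ?_
  intro i
  simp only [Function.Involutive.coe_toPerm]
  by_cases h : (i : ℕ) % 2 = 0
  · rw [J0_even v h, permJfun_even h]; simp
  · rw [J0_odd v h, permJfun_odd h]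

lemma J0_inner {n : ℕ} (v : EuclideanSpace ℝ (Fin (2 * n))) : ⟪v, J0 v⟫ = 0 := by
  rw [PiLp.inner_apply]
  refine Finset.sum_ninvolution (permJfun n) ?_ ?_ (fun a => Finset.mem_univ _)
    (permJfun_involutive n)
  · intro i
    by_cases h : (i : ℕ) % 2 = 0
    · rw [permJfun_even h, J0_even v h,
        J0_odd v (i := ⟨(i : ℕ) + 1, by have := i.isLt; omega⟩)
          (show ¬((i : ℕ) + 1) % 2 = 0 by omega)]
      have e1 : (⟨(i : ℕ) + 1 - 1, by have := i.isLt; omega⟩ : Fin (2 * n)) = i := by ext; simp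
      rw [e1]
      simp only [RCLike.inner_apply, conj_trivial]
      ring
    · rw [permJfun_odd h, J0_odd v h,
        J0_even v (i := ⟨(i : ℕ) - 1, by have := i.isLt; omega⟩)
          (show ((i : ℕ) - 1) % 2 = 0 by omega)]
      have e1 : (⟨(i : ℕ) - 1 + 1, by have := i.isLt; omega⟩ : Fin (2 * n)) = i := by
        ext; simp; omega
      rw [e1]
      simp only [RCLike.inner_apply, conj_trivial]
      ring
  · intro i _
    by_cases h : (i : ℕ) % 2 = 0
    · rw [permJfun_even h]
      intro he
      have := congrArg Fin.val he
      simp at this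
    · rw [permJfun_odd h]
      intro he
      have := congrArg Fin.val he
      simp at this
      omega

/-- The Stiefel manifold `Q̃_n` of orthonormal 2-frames in `ℝ^{2n}` (equivalently, unit-norm
isotropic vectors `a + ib` for the complexified standard quadratic form on `ℂ^{2n}`),
with the subspace topology. -/
def QTilde (n : ℕ) : Type :=
  {p : EuclideanSpace ℝ (Fin (2 * n)) × EuclideanSpace ℝ (Fin (2 * n)) //
    ‖p.1‖ = 1 ∧ ‖p.2‖ = 1 ∧ ⟪p.1, p.2⟫ = 0}

instance (n : ℕ) : TopologicalSpace (QTilde n) :=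
  inferInstanceAs (TopologicalSpace
    {p : EuclideanSpace ℝ (Fin (2 * n)) × EuclideanSpace ℝ (Fin (2 * n)) //
      ‖p.1‖ = 1 ∧ ‖p.2‖ = 1 ∧ ⟪p.1, p.2⟫ = 0})

/-- The section `σ : S^{2n-1} → Q̃_n`, `a ↦ (a, -J₀a)`, of the unit tangent bundle of the
sphere. -/
def sectionC (n : ℕ) : C(Metric.sphere (0 : EuclideanSpace ℝ (Fin (2 * n))) 1, QTilde n) where
  toFun a := ⟨((a : EuclideanSpace ℝ (Fin (2 * n))), -J0 (a : EuclideanSpace ℝ (Fin (2 * n)))),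
    by
      have ha : ‖(a : EuclideanSpace ℝ (Fin (2 * n)))‖ = 1 := by
        simpa using mem_sphere_zero_iff_norm.mp a.2
      exact ⟨ha, by rw [norm_neg, J0_norm, ha], by rw [inner_neg_right, J0_inner, neg_zero]⟩⟩
  continuous_toFun := by
    apply Continuous.subtype_mk
    exact continuous_subtype_val.prodMk (J0_continuous.comp continuous_subtype_val).neg

/-- The fibre `S(a₀^⊥)` of the unit tangent bundle of `S^{2n-1}` over `a₀`: the sphere of unit
vectors orthogonal to `a₀`. -/
def Fib {n : ℕ} (a₀ : Metric.sphere (0 : EuclideanSpace ℝ (Fin (2 * n))) 1) : Type :=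
  {b : EuclideanSpace ℝ (Fin (2 * n)) //
    ‖b‖ = 1 ∧ ⟪(a₀ : EuclideanSpace ℝ (Fin (2 * n))), b⟫ = 0}

instance {n : ℕ} (a₀ : Metric.sphere (0 : EuclideanSpace ℝ (Fin (2 * n))) 1) :
    TopologicalSpace (Fib a₀) :=
  inferInstanceAs (TopologicalSpace
    {b : EuclideanSpace ℝ (Fin (2 * n)) //
      ‖b‖ = 1 ∧ ⟪(a₀ : EuclideanSpace ℝ (Fin (2 * n))), b⟫ = 0})

/-- The base point `-J₀a₀` of the fibre `S(a₀^⊥)`. -/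
def fibBase {n : ℕ} (a₀ : Metric.sphere (0 : EuclideanSpace ℝ (Fin (2 * n))) 1) : Fib a₀ :=
  ⟨-J0 (a₀ : EuclideanSpace ℝ (Fin (2 * n))), by
    have ha : ‖(a₀ : EuclideanSpace ℝ (Fin (2 * n)))‖ = 1 := by
      simpa using mem_sphere_zero_iff_norm.mp a₀.2
    exact ⟨by rw [norm_neg, J0_norm, ha], by rw [inner_neg_right, J0_inner, neg_zero]⟩⟩

/-- The fibre inclusion `ι : S(a₀^⊥) → Q̃_n`, `b ↦ (a₀, b)`. -/
def fibC {n : ℕ} (a₀ : Metric.sphere (0 : EuclideanSpace ℝ (Fin (2 * n))) 1) :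
    C(Fib a₀, QTilde n) where
  toFun b := ⟨((a₀ : EuclideanSpace ℝ (Fin (2 * n))), b.val),
    ⟨by simpa using mem_sphere_zero_iff_norm.mp a₀.2, b.2.1, b.2.2⟩⟩
  continuous_toFun := by
    apply Continuous.subtype_mk
    exact continuous_const.prodMk continuous_subtype_val

lemma fibC_base {n : ℕ} (a₀ : Metric.sphere (0 : EuclideanSpace ℝ (Fin (2 * n))) 1) :
    fibC a₀ (fibBase a₀) = sectionC n a₀ := rfl

/-- The map induced on homotopy groups (classes of generalized loops) by a pointed continuous
map. -/
def piMap {X Y : Type*} [TopologicalSpace X] [TopologicalSpace Y]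
    (N : Type*) {x : X} {y : Y} (f : C(X, Y)) (hf : f x = y) :
    HomotopyGroup N X x → HomotopyGroup N Y y :=
  Quotient.map
    (fun p => ⟨f.comp p.1, fun t ht => by
      simp only [ContinuousMap.comp_apply, p.2 t ht, hf]⟩)
    (fun p q h => h.map fun H => H.compContinuousMap f)

/-- The map `(α, β) ↦ σ_*(α) + ι_*(β)` from
`π_{2n-1}(S^{2n-1}, a₀) × π_{2n-1}(S(a₀^⊥), -J₀a₀)` to `π_{2n-1}(Q̃_n, (a₀, -J₀a₀))`. -/
def combinedMap (n m : ℕ) (a₀ : Metric.sphere (0 : EuclideanSpace ℝ (Fin (2 * n))) 1) :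
    (π_ (2 * m + 3) (Metric.sphere (0 : EuclideanSpace ℝ (Fin (2 * n))) 1) a₀ ×
      π_ (2 * m + 3) (Fib a₀) (fibBase a₀)) →
      π_ (2 * m + 3) (QTilde n) (sectionC n a₀) :=
  fun αβ =>
    piMap (Fin (2 * m + 3)) (sectionC n) rfl αβ.1 *
      piMap (Fin (2 * m + 3)) (fibC a₀) (fibC_base a₀) αβ.2

/-!
The projection `p (a, b) = a` makes `Q̃_n` a sphere bundle over `S^{2n-1}` with fibre `S(a₀^⊥)`,
and it has the homotopy lifting property: when `a` moves, `b` can follow by being projected onto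
the orthogonal complement of the moving `a` and renormalised, in time steps so short that `a`
moves by less than `1` and the projection never vanishes.
With the section `σ` this gives a split short exact sequence
`1 → π_k(S(a₀^⊥)) → π_k(Q̃_n) → π_k(S^{2n-1}) → 1`. Exactness in the middle: lift a
null-homotopy of `p ∘ γ` to push `γ` into the fibre. Injectivity on the left: if `ι ∘ b` is
null-homotopic through `H`, then `H` followed by the reverse of `σ ∘ p ∘ H` lies over the
contractible `(p ∘ H) · (p ∘ H)⁻¹`; lifting that contraction deforms it into the fibre.
For a split extension `(α, β) ↦ σ_* α · ι_* β` is bijective, and it is a homomorphism because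
`π_{2n-1}` is abelian.
-/

open scoped unitInterval
open Topology.Homotopy

section Transport

variable {E : Type*} [NormedAddCommGroup E] [InnerProductSpace ℝ E]

def normalizedRejection (a b : E) : E :=
  ‖b - ⟪a, b⟫ • a‖⁻¹ • (b - ⟪a, b⟫ • a)

lemma norm_sub_inner_smul_sq {a : E} (ha : ‖a‖ = 1) (b : E) :
    ‖b - ⟪a, b⟫ • a‖ ^ 2 = ‖b‖ ^ 2 - ⟪a, b⟫ ^ 2 := by
  rw [norm_sub_sq_real, real_inner_smul_right, norm_smul, ha, Real.norm_eq_abs, mul_one, sq_abs,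
    real_inner_comm]
  ring

lemma sub_inner_smul_ne_zero {a b : E} (ha : ‖a‖ = 1) (hb : ‖b‖ = 1) (hab : |⟪a, b⟫| < 1) :
    b - ⟪a, b⟫ • a ≠ 0 := by
  rw [← norm_ne_zero_iff, ← pow_ne_zero_iff two_ne_zero, norm_sub_inner_smul_sq ha, hb, one_pow,
    sub_ne_zero, ne_comm]
  exact ((sq_lt_one_iff_abs_lt_one _).mpr hab).ne

lemma norm_normalizedRejection {a b : E} (ha : ‖a‖ = 1) (hb : ‖b‖ = 1) (hab : |⟪a, b⟫| < 1) :
    ‖normalizedRejection a b‖ = 1 := by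
  rw [normalizedRejection, norm_smul, norm_inv, norm_norm,
    inv_mul_cancel₀ (norm_ne_zero_iff.mpr (sub_inner_smul_ne_zero ha hb hab))]

lemma inner_normalizedRejection {a : E} (ha : ‖a‖ = 1) (b : E) :
    ⟪a, normalizedRejection a b⟫ = 0 := by
  rw [normalizedRejection, real_inner_smul_right, inner_sub_right, real_inner_smul_right,
    real_inner_self_eq_norm_sq, ha]
  ring

lemma normalizedRejection_of_inner_eq_zero {a b : E} (hab : ⟪a, b⟫ = 0) (hb : ‖b‖ = 1) :
    normalizedRejection a b = b := by
  rw [normalizedRejection, hab, zero_smul, sub_zero, hb, inv_one, one_smul]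

lemma Continuous.normalizedRejection {W : Type*} [TopologicalSpace W] {a b : W → E}
    (ha : Continuous a) (hb : Continuous b) (hab : ∀ w, b w - ⟪a w, b w⟫ • a w ≠ 0) :
    Continuous fun w => normalizedRejection (a w) (b w) := by
  have hrej : Continuous fun w => b w - ⟪a w, b w⟫ • a w := hb.sub ((ha.inner hb).smul ha)
  exact (hrej.norm.inv₀ fun w => norm_ne_zero_iff.mpr (hab w)).smul hrej

lemma abs_inner_lt_one_of_inner_eq_zero {a a' v : E} (hv : ‖v‖ = 1) (ha'v : ⟪a', v⟫ = 0)
    (haa' : ‖a - a'‖ < 1) : |⟪a, v⟫| < 1 := by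
  rw [← sub_add_cancel a a', inner_add_left, ha'v, add_zero]
  exact (abs_real_inner_le_norm _ _).trans_lt (by rwa [hv, mul_one])

lemma ContinuousMap.exists_forall_dist_lt {Z Y : Type*} [TopologicalSpace Z] [CompactSpace Z]
    [PseudoMetricSpace Y] (G : C(I × Z, Y)) {ε : ℝ} (hε : 0 < ε) :
    ∃ δ > 0, ∀ s s' : I, dist s s' < δ → ∀ z, dist (G (s, z)) (G (s', z)) < ε := by
  obtain ⟨δ, hδ, hG⟩ := Metric.uniformContinuous_iff.mp
    (CompactSpace.uniformContinuous_of_continuous G.curry.continuous) ε hε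
  exact ⟨δ, hδ, fun s s' hss' z => (ContinuousMap.dist_apply_le_dist z).trans_lt (hG hss')⟩

def truncTime (N i : ℕ) (t : I) : I :=
  ⟨min t (i / N), le_min t.2.1 (by positivity), (min_le_left _ _).trans t.2.2⟩

lemma dist_truncTime_succ_le (N i : ℕ) (t : I) :
    dist (truncTime N (i + 1) t) (truncTime N i t) ≤ 1 / N := by
  rw [Subtype.dist_eq, Real.dist_eq]
  refine (abs_min_sub_min_le_max _ _ _ _).trans ?_
  rw [sub_self, abs_zero, Nat.cast_succ, add_div, add_sub_cancel_left,
    abs_of_nonneg (by positivity)]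
  exact max_le (by positivity) le_rfl

lemma truncTime_zero_left (N : ℕ) (t : I) : truncTime N 0 t = 0 :=
  Subtype.ext (by simp [truncTime, min_eq_right t.2.1])

lemma truncTime_zero_right (N i : ℕ) : truncTime N i 0 = 0 :=
  Subtype.ext (by simp [truncTime, min_eq_left (by positivity : (0 : ℝ) ≤ i / N)])

lemma truncTime_self {N : ℕ} (hN : 0 < N) (t : I) : truncTime N N t = t :=
  Subtype.ext (by simp [truncTime, div_self (Nat.cast_ne_zero.mpr hN.ne' : (N : ℝ) ≠ 0), t.2.2])

lemma continuous_truncTime (N i : ℕ) : Continuous (truncTime N i) :=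
  (continuous_subtype_val.min continuous_const).subtype_mk _

variable {Z : Type*} [TopologicalSpace Z]

def transport (G : I × Z → E) (b : Z → E) (N : ℕ) : ℕ → I × Z → E
  | 0, q => b q.2
  | i + 1, q => normalizedRejection (G (truncTime N (i + 1) q.1, q.2)) (transport G b N i q)

section

variable {G : C(I × Z, E)} {b : C(Z, E)} {N : ℕ}

lemma transport_spec (hG : ∀ q, ‖G q‖ = 1) (hb : ∀ z, ‖b z‖ = 1)
    (hGb : ∀ z, ⟪G (0, z), b z⟫ = 0)
    (hstep : ∀ i t z, ‖G (truncTime N (i + 1) t, z) - G (truncTime N i t, z)‖ < 1) (i : ℕ) :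
    Continuous (transport G b N i) ∧
      ∀ q, ‖transport G b N i q‖ = 1 ∧
        ⟪G (truncTime N i q.1, q.2), transport G b N i q⟫ = 0 := by
  induction i with
  | zero =>
    refine ⟨b.continuous.comp continuous_snd, fun q => ⟨hb q.2, ?_⟩⟩
    rw [truncTime_zero_left]
    exact hGb q.2
  | succ i ih =>
    obtain ⟨hcont, hspec⟩ := ih
    have hsmall (q : I × Z) : |⟪G (truncTime N (i + 1) q.1, q.2), transport G b N i q⟫| < 1 :=
      abs_inner_lt_one_of_inner_eq_zero (hspec q).1 (hspec q).2 (hstep i q.1 q.2)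
    refine ⟨?_, fun q => ⟨norm_normalizedRejection (hG _) (hspec q).1 (hsmall q),
      inner_normalizedRejection (hG _) _⟩⟩
    exact Continuous.normalizedRejection
      (G.continuous.comp (((continuous_truncTime N _).comp continuous_fst).prodMk continuous_snd))
      hcont fun q => sub_inner_smul_ne_zero (hG _) (hspec q).1 (hsmall q)

lemma transport_eq_of_forall_eq {t : I} {z : Z} (hb : ‖b z‖ = 1) (hGb : ⟪G (0, z), b z⟫ = 0)
    (hGz : ∀ i, G (truncTime N i t, z) = G (0, z)) (i : ℕ) :
    transport G b N i (t, z) = b z := by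
  induction i with
  | zero => rfl
  | succ i ih =>
    rw [transport, ih, hGz]
    exact normalizedRejection_of_inner_eq_zero hGb hb

end

theorem exists_unit_orthogonal_lift [CompactSpace Z] (G : C(I × Z, E)) (hG : ∀ q, ‖G q‖ = 1)
    (b : C(Z, E)) (hb : ∀ z, ‖b z‖ = 1) (hGb : ∀ z, ⟪G (0, z), b z⟫ = 0) :
    ∃ f : C(I × Z, E), (∀ q, ‖f q‖ = 1 ∧ ⟪G q, f q⟫ = 0) ∧ (∀ z, f (0, z) = b z) ∧
      ∀ z, (∀ t, G (t, z) = G (0, z)) → ∀ t, f (t, z) = b z := by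
  obtain ⟨δ, hδ, hG_dist⟩ := G.exists_forall_dist_lt one_pos
  obtain ⟨N, hN⟩ := exists_nat_one_div_lt hδ
  have hstep (i t z) :
      ‖G (truncTime (N + 1) (i + 1) t, z) - G (truncTime (N + 1) i t, z)‖ < 1 := by
    rw [← dist_eq_norm]
    refine hG_dist _ _ ((dist_truncTime_succ_le _ i t).trans_lt ?_) z
    exact_mod_cast hN
  obtain ⟨hcont, hspec⟩ := transport_spec hG hb hGb hstep (N + 1)
  refine ⟨⟨_, hcont⟩, fun q => ?_, fun z => ?_, fun z hz t => ?_⟩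
  · simpa only [truncTime_self N.succ_pos, ContinuousMap.coe_mk] using hspec q
  · exact transport_eq_of_forall_eq (hb z) (hGb z) (fun i => by rw [truncTime_zero_right]) _
  · exact transport_eq_of_forall_eq (hb z) (hGb z) (fun i => hz _) _

end Transport

local notation "𝕊" n:max => Metric.sphere (0 : EuclideanSpace ℝ (Fin (2 * n))) 1

section Bundle

open ContinuousMap

variable {n : ℕ}

def QTilde.proj (n : ℕ) : C(QTilde n, 𝕊 n) :=
  ⟨fun e => ⟨e.1.1, mem_sphere_zero_iff_norm.mpr e.2.1⟩,
    (continuous_fst.comp continuous_subtype_val).subtype_mk _⟩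

def fibLift {Z : Type*} [TopologicalSpace Z] {a₀ : 𝕊 n} (e : C(Z, QTilde n))
    (he : (QTilde.proj n).comp e = const Z a₀) : C(Z, Fib a₀) :=
  ⟨fun z => ⟨(e z).1.2, (e z).2.2.1,
      congrArg Subtype.val (DFunLike.congr_fun he z) ▸ (e z).2.2.2⟩,
    (continuous_snd.comp (continuous_subtype_val.comp e.continuous)).subtype_mk _⟩

lemma fibC_comp_fibLift {Z : Type*} [TopologicalSpace Z] {a₀ : 𝕊 n} (e : C(Z, QTilde n))
    (he : (QTilde.proj n).comp e = const Z a₀) : (fibC a₀).comp (fibLift e he) = e := by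
  ext z : 1
  exact Subtype.ext (Prod.ext (congrArg Subtype.val (DFunLike.congr_fun he z)).symm rfl)

theorem QTilde.exists_homotopicRel_lift {Z : Type*} [TopologicalSpace Z] [CompactSpace Z]
    {A : Set Z} {e : C(Z, QTilde n)} {g : C(Z, 𝕊 n)}
    (F : ((QTilde.proj n).comp e).HomotopyRel g A) :
    ∃ e' : C(Z, QTilde n), (QTilde.proj n).comp e' = g ∧ e.HomotopicRel e' A := by
  have hF (q) : ‖(F q : EuclideanSpace ℝ (Fin (2 * n)))‖ = 1 :=
    mem_sphere_zero_iff_norm.mp (F q).2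
  obtain ⟨f, hf, hf0, hfconst⟩ := exists_unit_orthogonal_lift
    ((⟨Subtype.val, continuous_subtype_val⟩ : C(𝕊 n, _)).comp F.toContinuousMap) hF
    ⟨fun z => (e z).1.2, continuous_snd.comp (continuous_subtype_val.comp e.continuous)⟩
    (fun z => (e z).2.2.1) (fun z => by
      change ⟪(F (0, z) : EuclideanSpace ℝ (Fin (2 * n))), (e z).1.2⟫ = 0
      rw [F.apply_zero]
      exact (e z).2.2.2)
  let L : C(I × Z, QTilde n) :=
    ⟨fun q => ⟨((F q : EuclideanSpace ℝ (Fin (2 * n))), f q), hF q, hf q⟩,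
      ((continuous_subtype_val.comp F.continuous).prodMk f.continuous).subtype_mk _⟩
  refine ⟨L.curry 1, ext fun z => Subtype.ext (congrArg Subtype.val (F.apply_one z)), ⟨
    { toFun := L
      map_zero_left z := Subtype.ext (Prod.ext (congrArg Subtype.val (F.apply_zero z)) (hf0 z))
      map_one_left z := rfl
      prop' t z hz := Subtype.ext (Prod.ext (congrArg Subtype.val (F.eq_fst t hz))
        (hfconst z (fun s => congrArg Subtype.val ((F.eq_fst s hz).trans (F.eq_fst 0 hz).symm))
          t)) }⟩⟩

end Bundle

def ContinuousMap.HomotopyRel.transSymmHomotopyRel {X Y : Type*} [TopologicalSpace X]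
    [TopologicalSpace Y] {f₀ f₁ : C(X, Y)} {S : Set X} (F : f₀.HomotopyRel f₁ S) :
    (F.trans F.symm).toContinuousMap.HomotopyRel (f₀.comp .snd)
      {q | q.1 = 0 ∨ q.1 = 1 ∨ q.2 ∈ S} :=
  let R := (Path.Homotopy.reflTransSymm (⟨.id I, rfl, rfl⟩ : Path (0 : I) 1)).symm
  { toFun := fun q => F (R (q.1, q.2.1), q.2.2)
    continuous_toFun := by fun_prop
    map_zero_left := fun q => by
      rw [R.apply_zero, Path.coe_toContinuousMap, Path.trans_apply]
      change _ = (F.trans F.symm) q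
      rw [HomotopyRel.trans_apply]
      split_ifs <;> rfl
    map_one_left := fun q => by
      rw [R.apply_one]
      exact F.apply_zero q.2
    prop' := by
      rintro s ⟨t, w⟩ (rfl | rfl | hw)
      · change F (R (s, 0), w) = (F.trans F.symm) (0, w)
        rw [Path.Homotopy.source, F.apply_zero, (F.trans F.symm).apply_zero]
      · change F (R (s, 1), w) = (F.trans F.symm) (1, w)
        rw [Path.Homotopy.target, F.apply_zero, (F.trans F.symm).apply_one]
      · change F (R (s, t), w) = (F.trans F.symm) (t, w)
        rw [F.eq_fst _ hw, (F.trans F.symm).eq_fst _ hw] }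

theorem homotopicRel_const_of_fibC {n : ℕ} {a₀ : 𝕊 n} {Z : Type*} [TopologicalSpace Z]
    [CompactSpace Z] {S : Set Z} {b : C(Z, Fib a₀)}
    (H : ((fibC a₀).comp b).HomotopyRel (.const Z (sectionC n a₀)) S) :
    b.HomotopicRel (.const Z (fibBase a₀)) S := by
  let K := H.trans ((H.compContinuousMap ((sectionC n).comp (QTilde.proj n))).symm.cast rfl rfl)
  have hK : (QTilde.proj n).comp K.toContinuousMap =
      ((H.compContinuousMap (QTilde.proj n)).trans
        (H.compContinuousMap (QTilde.proj n)).symm).toContinuousMap := by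
    ext1 q
    change QTilde.proj n (K q) = (_ : ContinuousMap.HomotopyRel _ _ S) q
    dsimp only [K]
    rw [ContinuousMap.HomotopyRel.trans_apply, ContinuousMap.HomotopyRel.trans_apply]
    split_ifs <;> rfl
  obtain ⟨e, he, ⟨L⟩⟩ := QTilde.exists_homotopicRel_lift
    ((H.compContinuousMap (QTilde.proj n)).transSymmHomotopyRel.cast hK.symm rfl)
  have hKe {q : I × Z} (hq : q.1 = 0 ∨ q.1 = 1 ∨ q.2 ∈ S) : K q = e q := L.fst_eq_snd hq
  refine ⟨{ toFun := fibLift e (he.trans rfl)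
            map_zero_left := fun w => Subtype.ext ?_
            map_one_left := fun w => Subtype.ext ?_
            prop' := fun t w hw => Subtype.ext ?_ }⟩
  · exact congrArg (fun x : QTilde n => x.1.2) ((hKe (Or.inl rfl)).symm.trans (K.apply_zero w))
  · exact congrArg (fun x : QTilde n => x.1.2)
      ((hKe (Or.inr (Or.inl rfl))).symm.trans (K.apply_one w))
  · exact congrArg (fun x : QTilde n => x.1.2)
      ((hKe (Or.inr (Or.inr hw))).symm.trans (K.eq_fst t hw))

section InducedMap

variable {N X Y W : Type*} [TopologicalSpace X] [TopologicalSpace Y] [TopologicalSpace W]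
  {x : X} {y : Y} {w : W}

def GenLoop.map (f : C(X, Y)) (hf : f x = y) (p : Ω^ N X x) : Ω^ N Y y :=
  ⟨f.comp p, fun t ht => by simp only [ContinuousMap.comp_apply, p.2 t ht, hf]⟩

lemma GenLoop.map_transAt [DecidableEq N] (f : C(X, Y)) (hf : f x = y) (i : N)
    (p q : Ω^ N X x) : map f hf (transAt i p q) = transAt i (map f hf p) (map f hf q) := by
  ext t
  change f (transAt i p q t) = _
  simp only [transAt, coe_copy]
  split_ifs <;> rfl

lemma piMap_piMap (f : C(X, Y)) (hf : f x = y) (g : C(Y, W)) (hg : g y = w)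
    (γ : HomotopyGroup N X x) :
    piMap N g hg (piMap N f hf γ) =
      piMap N (g.comp f) (by rw [ContinuousMap.comp_apply, hf, hg]) γ :=
  Quotient.inductionOn γ fun _ => rfl

lemma piMap_eq_self {f : C(X, X)} (hf : ∀ x', f x' = x') (γ : HomotopyGroup N X x) :
    piMap N f (hf x) γ = γ :=
  Quotient.inductionOn γ fun p => congrArg _ (GenLoop.ext _ _ fun t => hf (p t))

variable [DecidableEq N] [Nonempty N]

lemma piMap_eq_one {f : C(X, Y)} (hf : ∀ x', f x' = y) (γ : HomotopyGroup N X x) :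
    piMap N f (hf x) γ = 1 :=
  Quotient.inductionOn γ fun p => congrArg _ (GenLoop.ext _ _ fun t => hf (p t))

variable (N) in
def piMapHom (f : C(X, Y)) (hf : f x = y) : HomotopyGroup N X x →* HomotopyGroup N Y y :=
  MonoidHom.mk' (piMap N f hf) fun γ δ =>
    Quotient.inductionOn₂ γ δ fun p q =>
      (congrArg (piMap N f hf) (HomotopyGroup.mul_spec (i := Classical.arbitrary N))).trans <|
        (congrArg _ (GenLoop.map_transAt f hf _ q p)).trans HomotopyGroup.mul_spec.symm

end InducedMap

theorem Function.MulExact.bijective_mul_of_leftInverse {A B G : Type*} [Group A] [Group B]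
    [Group G] {i : B →* G} {p : G →* A} (hexact : Function.MulExact i p)
    (hi : Function.Injective i) {s : A →* G} (hs : Function.LeftInverse p s) :
    Function.Bijective fun x : A × B => s x.1 * i x.2 := by
  refine ⟨fun ⟨a, b⟩ ⟨a', b'⟩ h => ?_, fun g => ?_⟩
  · have ha : a = a' := by
      simpa [hs a, hs a', hexact.apply_apply_eq_one] using congrArg p h
    subst ha
    exact Prod.ext rfl (hi (mul_left_cancel h))
  · obtain ⟨b, hb⟩ := (hexact ((s (p g))⁻¹ * g)).mp (by simp [hs (p g)])
    exact ⟨(p g, b), by simp [hb]⟩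

section HomotopyGroups

variable {n : ℕ} (a₀ : 𝕊 n) (N : Type*) [DecidableEq N] [Nonempty N]

theorem mulExact_piMapHom_fibC_proj :
    Function.MulExact (piMapHom N (fibC a₀) (fibC_base a₀))
      (piMapHom N (QTilde.proj n) rfl) := by
  intro γ
  refine ⟨fun hγ => ?_, ?_⟩
  · induction γ using Quotient.inductionOn with | h e => ?_
    obtain ⟨F⟩ : GenLoop.Homotopic (GenLoop.map (QTilde.proj n) rfl e) GenLoop.const :=
      Quotient.exact hγ
    obtain ⟨e', he', ⟨F'⟩⟩ := QTilde.exists_homotopicRel_lift F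
    refine ⟨⟦⟨fibLift e' he', fun w hw => Subtype.ext ?_⟩⟧, Quotient.sound ?_⟩
    · exact congrArg (fun x : QTilde n => x.1.2) ((F'.fst_eq_snd hw).symm.trans (e.2 w hw))
    · exact ⟨(F'.cast rfl (fibC_comp_fibLift e' he').symm).symm⟩
  · rintro ⟨β, rfl⟩
    exact (piMap_piMap (fibC a₀) (fibC_base a₀) (QTilde.proj n) rfl β).trans
      (piMap_eq_one (fun _ => rfl) β)

theorem piMapHom_fibC_injective : Function.Injective (piMapHom N (fibC a₀) (fibC_base a₀)) := by
  refine (injective_iff_map_eq_one _).mpr fun β hβ => ?_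
  induction β using Quotient.inductionOn with | h b => ?_
  obtain ⟨H⟩ : GenLoop.Homotopic (GenLoop.map (fibC a₀) (fibC_base a₀) b) GenLoop.const :=
    Quotient.exact hβ
  exact Quotient.sound (homotopicRel_const_of_fibC H)

theorem bijective_piMap_sectionC_mul_piMap_fibC :
    Function.Bijective
      fun x : HomotopyGroup N (𝕊 n) a₀ × HomotopyGroup N (Fib a₀) (fibBase a₀) =>
        piMap N (sectionC n) rfl x.1 * piMap N (fibC a₀) (fibC_base a₀) x.2 :=
  (mulExact_piMapHom_fibC_proj a₀ N).bijective_mul_of_leftInverse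
    (piMapHom_fibC_injective a₀ N) (s := piMapHom N (sectionC n) rfl)
    fun α => (piMap_piMap (sectionC n) rfl (QTilde.proj n) rfl α).trans
      (piMap_eq_self (fun _ => rfl) α)

end HomotopyGroups

theorem splitting_of_homotopy_of_QTilde_general (n m : ℕ)
    (a₀ : Metric.sphere (0 : EuclideanSpace ℝ (Fin (2 * n))) 1) :
    Function.Bijective (combinedMap n m a₀) ∧
    ∀ x y, combinedMap n m a₀ (x * y) = combinedMap n m a₀ x * combinedMap n m a₀ y :=
  ⟨bijective_piMap_sectionC_mul_piMap_fibC a₀ _,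
    fun x y => map_mul ((piMapHom (Fin (2 * m + 3)) (sectionC n) rfl).coprod
      (piMapHom _ (fibC a₀) (fibC_base a₀))) x y⟩

/-- For `n ≥ 2` (here `n = m + 2`, so `2n - 1 = 2m + 3`), the map
`(α, β) ↦ σ_*(α) + ι_*(β)` is a group isomorphism
`π_{2n-1}(S^{2n-1}, a₀) × π_{2n-1}(S(a₀^⊥), -J₀a₀) ≅ π_{2n-1}(Q̃_n, (a₀, -J₀a₀))`. -/
theorem splitting_of_homotopy_of_QTilde (n m : ℕ) (hn : n = m + 2)
    (a₀ : Metric.sphere (0 : EuclideanSpace ℝ (Fin (2 * n))) 1) :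
    Function.Bijective (combinedMap n m a₀) ∧
    ∀ x y, combinedMap n m a₀ (x * y) = combinedMap n m a₀ x * combinedMap n m a₀ y :=
  splitting_of_homotopy_of_QTilde_general n m a₀

end
end

section
/- Let R be a unique factorization domain and let p, q, f, g ∈ R with p ≠ 0, q ≠ 0, p and q having no common non-unit factor, and f ≠ 0. Define R-linear maps d⁻ : R² → R², d⁻(a,b) = (-q(ga + fb), p(ga + fb)) and d⁺ : R² → R², d⁺(u₁,u₂) = (f(pu₁ + qu₂), -g(pu₁ + qu₂)). Then d⁺ ∘ d⁻ = 0, and the quotient module ker(d⁺)/image(d⁻) is isomorphic as an R-module to R/(f,g), the quotient of R by the ideal generated by f and g. -/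
/-- The odd-to-even differential of the 2-periodic Clifford (Koszul) complex associated to the
isotropic section `(f•(p,q), g•((p,q)⌟ω))`: `d⁻(a,b) = (-q(ga+fb), p(ga+fb))`. -/
noncomputable def dMinus {R : Type*} [CommRing R] (p q f g : R) : (R × R) →ₗ[R] (R × R) where
  toFun ab := (-(q * (g * ab.1 + f * ab.2)), p * (g * ab.1 + f * ab.2))
  map_add' a b := by
    simp only [Prod.fst_add, Prod.snd_add, Prod.mk_add_mk, Prod.mk.injEq]
    constructor <;> ring
  map_smul' c a := by
    simp only [Prod.smul_fst, Prod.smul_snd, smul_eq_mul, RingHom.id_apply, Prod.smul_mk,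
      Prod.mk.injEq]
    constructor <;> ring

/-- The even-to-odd differential of the 2-periodic Clifford (Koszul) complex:
`d⁺(u₁,u₂) = (f(pu₁+qu₂), -g(pu₁+qu₂))`. -/
noncomputable def dPlus {R : Type*} [CommRing R] (p q f g : R) : (R × R) →ₗ[R] (R × R) where
  toFun u := (f * (p * u.1 + q * u.2), -(g * (p * u.1 + q * u.2)))
  map_add' a b := by
    simp only [Prod.fst_add, Prod.snd_add, Prod.mk_add_mk, Prod.mk.injEq]
    constructor <;> ring
  map_smul' c a := by
    simp only [Prod.smul_fst, Prod.smul_snd, smul_eq_mul, RingHom.id_apply, Prod.smul_mk,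
      Prod.mk.injEq]
    constructor <;> ring

/-!
Both differentials factor through the pairing `π_{a,b}(u₁, u₂) = a u₁ + b u₂ : R² → R` and the
syzygy `σ_{a,b}(c) = (b c, -a c) : R → R²` of `(a, b)`: `d⁺ = σ_{g,f} ∘ π_{p,q}` and
`d⁻ = -σ_{p,q} ∘ π_{g,f}`. Since `π_{p,q} ∘ σ_{p,q} = 0`, the composite vanishes. When `f ≠ 0`
the map `σ_{g,f}` is injective, so `ker d⁺ = ker π_{p,q}`, and since `p, q` are coprime (and
`q ≠ 0`) this kernel is the image of the injective map `σ_{p,q}`. Transporting along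
`σ_{p,q} : R ≅ ker d⁺`, the image of `d⁻` becomes `im π_{g,f} = (f, g)`.
-/

section SyzygyFactorization

open LinearMap

variable {R : Type*}

section CommRing

variable [CommRing R]

noncomputable def pairing (a b : R) : R × R →ₗ[R] R :=
  (mulLeft R a).coprod (mulLeft R b)

noncomputable def syzygy (a b : R) : R →ₗ[R] R × R :=
  (mulLeft R b).prod (-mulLeft R a)

@[simp]
theorem pairing_apply (a b : R) (u : R × R) : pairing a b u = a * u.1 + b * u.2 := rfl

@[simp]
theorem syzygy_apply (a b c : R) : syzygy a b c = (b * c, -(a * c)) := rfl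

theorem pairing_comp_syzygy (a b : R) : (pairing a b).comp (syzygy a b) = 0 := by
  ext
  simp only [comp_apply, pairing_apply, syzygy_apply, LinearMap.zero_apply]
  ring

theorem dPlus_eq_syzygy_comp_pairing (p q f g : R) :
    dPlus p q f g = (syzygy g f).comp (pairing p q) := rfl

theorem dMinus_eq_neg_syzygy_comp_pairing (p q f g : R) :
    dMinus p q f g = -(syzygy p q).comp (pairing g f) := by
  ext <;> simp [dMinus]

theorem dPlus_comp_dMinus (p q f g : R) : (dPlus p q f g).comp (dMinus p q f g) = 0 := by
  rw [dPlus_eq_syzygy_comp_pairing, dMinus_eq_neg_syzygy_comp_pairing, comp_neg, comp_assoc,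
    ← comp_assoc (pairing g f) (syzygy p q), pairing_comp_syzygy, zero_comp, comp_zero, neg_zero]

theorem range_mulLeft (a : R) : range (mulLeft R a) = Ideal.span {a} := by
  ext x
  simp [Ideal.mem_span_singleton', mul_comm]

theorem range_pairing (a b : R) : range (pairing a b) = Ideal.span {a, b} := by
  rw [pairing, range_coprod, range_mulLeft, range_mulLeft, Ideal.span_insert]

theorem range_dMinus (p q f g : R) :
    range (dMinus p q f g) = Submodule.map (syzygy p q) (Ideal.span {f, g}) := by
  rw [dMinus_eq_neg_syzygy_comp_pairing, range_neg, range_comp, range_pairing,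
    Set.pair_comm]

end CommRing

section Domain

variable [CommRing R] [NoZeroDivisors R]

theorem syzygy_injective {a b : R} (hb : b ≠ 0) : Function.Injective (syzygy a b) := by
  intro c c' h
  exact mul_left_cancel₀ hb (congrArg Prod.fst h)

theorem ker_dPlus_eq_ker_pairing {p q f g : R} (hf : f ≠ 0) :
    ker (dPlus p q f g) = ker (pairing p q) := by
  rw [dPlus_eq_syzygy_comp_pairing, ker_comp, ker_eq_bot.2 (syzygy_injective hf),
    Submodule.comap_bot]

theorem ker_pairing_eq_range_syzygy [DecompositionMonoid R] {a b : R} (hb : b ≠ 0)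
    (hab : IsRelPrime a b) :
    ker (pairing a b) = range (syzygy a b) := by
  refine le_antisymm (fun u hu => ?_) (range_le_ker_iff.2 (pairing_comp_syzygy a b))
  obtain ⟨u₁, u₂⟩ := u
  have hrel : a * u₁ + b * u₂ = 0 := hu
  obtain ⟨c, rfl⟩ : b ∣ u₁ := hab.symm.dvd_of_dvd_mul_left ⟨-u₂, by linear_combination hrel⟩
  have hu₂ : u₂ = -(a * c) := mul_left_cancel₀ hb (by linear_combination hrel)
  exact ⟨c, by simp [hu₂]⟩

end Domain

theorem nonempty_quotient_equiv_of_range_eq [CommRing R] {M N : Type*} [AddCommGroup M]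
    [Module R M] [AddCommGroup N] [Module R N] {φ : M →ₗ[R] N} (hφ : Function.Injective φ)
    {K : Submodule R N} (hK : range φ = K) (P : Submodule R M) :
    Nonempty ((K ⧸ (P.map φ).comap K.subtype) ≃ₗ[R] M ⧸ P) := by
  let ψ : M →ₗ[R] K := φ.codRestrict K fun m => hK ▸ mem_range_self φ m
  have hψ : Function.Surjective ψ := by
    rintro ⟨n, hn⟩
    obtain ⟨m, rfl⟩ := mem_range.1 (hK ▸ hn)
    exact ⟨m, rfl⟩
  let Φ := ((P.map φ).comap K.subtype).mkQ.comp ψ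
  have hΦ : ker Φ = P := by
    rw [ker_comp, Submodule.ker_mkQ, ← Submodule.comap_comp, subtype_comp_codRestrict,
      Submodule.comap_map_eq_of_injective hφ]
  exact ⟨((Submodule.quotEquivOfEq _ _ hΦ).symm.trans
    (Φ.quotKerEquivOfSurjective ((Submodule.mkQ_surjective _).comp hψ))).symm⟩

end SyzygyFactorization

theorem odd_cohomology_of_clifford_complex_general {R : Type*} [CommRing R] [IsDomain R]
    [UniqueFactorizationMonoid R] (p q f g : R)
    (hq : q ≠ 0) (hpq : IsRelPrime p q) (hf : f ≠ 0) :
    (dPlus p q f g).comp (dMinus p q f g) = 0 ∧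
    Nonempty
      ((↥(LinearMap.ker (dPlus p q f g)) ⧸
          (LinearMap.range (dMinus p q f g)).comap (LinearMap.ker (dPlus p q f g)).subtype)
        ≃ₗ[R] (R ⧸ Ideal.span {f, g})) := by
  refine ⟨dPlus_comp_dMinus p q f g, ?_⟩
  have hker : LinearMap.range (syzygy p q) = LinearMap.ker (dPlus p q f g) := by
    rw [ker_dPlus_eq_ker_pairing hf, ker_pairing_eq_range_syzygy hq hpq]
  rw [range_dMinus]
  exact nonempty_quotient_equiv_of_range_eq (syzygy_injective hq) hker _

/-- Over a UFD, with `p,q` relatively prime nonzero and `f ≠ 0`,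
`d⁺ ∘ d⁻ = 0` and `ker d⁺ / im d⁻ ≅ R/(f,g)`. -/
theorem odd_cohomology_of_clifford_complex {R : Type*} [CommRing R] [IsDomain R]
    [UniqueFactorizationMonoid R] (p q f g : R)
    (hp : p ≠ 0) (hq : q ≠ 0) (hpq : IsRelPrime p q) (hf : f ≠ 0) :
    (dPlus p q f g).comp (dMinus p q f g) = 0 ∧
    Nonempty
      ((↥(LinearMap.ker (dPlus p q f g)) ⧸
          (LinearMap.range (dMinus p q f g)).comap (LinearMap.ker (dPlus p q f g)).subtype)
        ≃ₗ[R] (R ⧸ Ideal.span {f, g})) :=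
  odd_cohomology_of_clifford_complex_general p q f g hq hpq hf
end

section
/- Let R = ℂ[x,y], let d ≥ 1 and 0 ≤ i, j ≤ d be integers, and define R-linear maps φ, ψ : R² → R² by φ(u,v) = (y^d·u + x^{d-i}y^{d-j}·v, x^i y^j·u + x^d·v) and ψ(u,v) = (x^d·u - x^{d-i}y^{d-j}·v, -x^i y^j·u + y^d·v). Then φ ∘ ψ = 0 = ψ ∘ φ, and there are R-module isomorphisms ker(φ)/image(ψ) ≅ ℂ[x,y]/(x^i, y^{d-j}) and ker(ψ)/image(φ) ≅ ℂ[x,y]/(y^j, x^{d-i}). In particular these quotients are finite dimensional over ℂ, of dimensions i(d-j) and j(d-i) respectively. -/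
/-!
Both differentials have rank one. With `a = x^{d-i}`, `a' = x^i`, `b = y^{d-j}`, `b' = y^j`
we have `φ = (b, a')ᵀ · (b', a)` and `ψ = (a, -b')ᵀ · (a', -b)`, so both composites vanish
because the inner products `b'a - ab'` and `a'b - ba'` do. As `x` and `y` are coprime, the
kernel of the row `(b', a)` is spanned by `(a, -b')`, the column of `ψ`; hence
`ker φ / im ψ ≅ R / (a', b)`, and symmetrically `ker ψ / im φ ≅ R / (b', a)`. Finally the
coefficients of the monomials `x^k y^l` with `k < m`, `l < n` identify `R / (x^m, y^n)`
with `ℂ^{m n}`.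
-/

open MvPolynomial

/-- `ℂ[x,y]`. -/
noncomputable abbrev RPoly : Type := MvPolynomial (Fin 2) ℂ

/-- `x`. -/
noncomputable def px : RPoly := X 0

/-- `y`. -/
noncomputable def py : RPoly := X 1

/-- `φ(u,v) = (y^d u + x^{d-i} y^{d-j} v, x^i y^j u + x^d v)`, one differential of the
2-periodic Clifford complex of the running example. -/
noncomputable def phiMap (d i j : ℕ) : (RPoly × RPoly) →ₗ[RPoly] (RPoly × RPoly) where
  toFun uv := (py ^ d * uv.1 + px ^ (d - i) * py ^ (d - j) * uv.2,
               px ^ i * py ^ j * uv.1 + px ^ d * uv.2)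
  map_add' a b := by
    simp only [Prod.fst_add, Prod.snd_add, Prod.mk_add_mk, Prod.mk.injEq]
    constructor <;> ring
  map_smul' c a := by
    simp only [Prod.smul_fst, Prod.smul_snd, smul_eq_mul, RingHom.id_apply, Prod.smul_mk,
      Prod.mk.injEq]
    constructor <;> ring

/-- `ψ(u,v) = (x^d u - x^{d-i} y^{d-j} v, -x^i y^j u + y^d v)`, the other differential of the
2-periodic Clifford complex of the running example. -/
noncomputable def psiMap (d i j : ℕ) : (RPoly × RPoly) →ₗ[RPoly] (RPoly × RPoly) where
  toFun uv := (px ^ d * uv.1 - px ^ (d - i) * py ^ (d - j) * uv.2,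
               -(px ^ i * py ^ j * uv.1) + py ^ d * uv.2)
  map_add' a b := by
    simp only [Prod.fst_add, Prod.snd_add, Prod.mk_add_mk, Prod.mk.injEq]
    constructor <;> ring
  map_smul' c a := by
    simp only [Prod.smul_fst, Prod.smul_snd, smul_eq_mul, RingHom.id_apply, Prod.smul_mk,
      Prod.mk.injEq]
    constructor <;> ring

open LinearMap

section Koszul

variable {R : Type*} [CommRing R]

def rowMap (p q : R) : R × R →ₗ[R] R := (mulLeft R p).coprod (mulLeft R q)

@[simp]
lemma rowMap_apply (p q : R) (z : R × R) : rowMap p q z = p * z.1 + q * z.2 := rfl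

lemma range_rowMap (p q : R) : range (rowMap p q) = Ideal.span {p, q} := by
  ext z
  simp only [mem_range, Prod.exists, rowMap_apply, Ideal.mem_span_pair]
  exact ⟨fun ⟨u, v, h⟩ => ⟨u, v, by rw [← h]; ring⟩, fun ⟨u, v, h⟩ => ⟨u, v, by rw [← h]; ring⟩⟩

lemma ker_rowMap [IsDomain R] [DecompositionMonoid R] {p q : R} (hpq : IsRelPrime p q)
    (hp : p ≠ 0) : ker (rowMap q p) = R ∙ (p, -q) := by
  ext ⟨u, v⟩
  simp only [mem_ker, rowMap_apply, Submodule.mem_span_singleton, Prod.smul_mk, smul_eq_mul,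
    Prod.mk.injEq]
  constructor
  · intro h
    obtain ⟨w, rfl⟩ : p ∣ u := hpq.dvd_of_dvd_mul_left ⟨-v, by linear_combination h⟩
    have hv : p * (q * w + v) = 0 := by linear_combination h
    exact ⟨w, mul_comm w p, by linear_combination -(mul_eq_zero.mp hv).resolve_left hp⟩
  · rintro ⟨w, rfl, rfl⟩
    ring

lemma toSpanSingleton_prod_injective [IsDomain R] {p : R} (q : R) (hp : p ≠ 0) :
    Function.Injective (toSpanSingleton R (R × R) (p, q)) :=
  smul_left_injective R (by simp [hp])

end Koszul

section Homology

variable {R M N P M' : Type*} [CommRing R] [AddCommGroup M] [Module R M] [AddCommGroup N]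
  [Module R N] [AddCommGroup P] [Module R P] [AddCommGroup M'] [Module R M']

noncomputable def kerQuotRangeEquivOfFactor (f : M →ₗ[R] M') (κ : N →ₗ[R] M) (ρ : P →ₗ[R] N)
    (hκ : Function.Injective κ) (hrange : range κ = ker f) :
    (ker f ⧸ (range (κ ∘ₗ ρ)).comap (ker f).subtype) ≃ₗ[R] N ⧸ range ρ :=
  let e : N ≃ₗ[R] ker f := (LinearEquiv.ofInjective κ hκ).trans (LinearEquiv.ofEq _ _ hrange)
  have he : (ker f).subtype ∘ₗ e.toLinearMap = κ := rfl
  (Submodule.Quotient.equiv _ _ e <| by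
    rw [range_comp, ← he, Submodule.map_comp,
      Submodule.comap_map_eq_of_injective (ker f).injective_subtype]).symm

end Homology

section Clifford

variable {R : Type*} [CommRing R]

noncomputable def cliffordPhi (a a' b b' : R) : R × R →ₗ[R] R × R :=
  toSpanSingleton R (R × R) (b, a') ∘ₗ rowMap b' a

noncomputable def cliffordPsi (a a' b b' : R) : R × R →ₗ[R] R × R :=
  toSpanSingleton R (R × R) (a, -b') ∘ₗ rowMap a' (-b)

lemma cliffordPhi_comp_cliffordPsi (a a' b b' : R) :
    cliffordPhi a a' b b' ∘ₗ cliffordPsi a a' b b' = 0 := by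
  ext <;> simp [cliffordPhi, cliffordPsi] <;> ring

lemma cliffordPsi_comp_cliffordPhi (a a' b b' : R) :
    cliffordPsi a a' b b' ∘ₗ cliffordPhi a a' b b' = 0 := by
  ext <;> simp [cliffordPhi, cliffordPsi] <;> ring

variable [IsDomain R] [DecompositionMonoid R] {a a' b b' : R}

lemma ker_cliffordPhi (ha : a ≠ 0) (hb : b ≠ 0) (hab' : IsRelPrime a b') :
    ker (cliffordPhi a a' b b') = range (toSpanSingleton R (R × R) (a, -b')) := by
  rw [cliffordPhi, ker_comp_of_ker_eq_bot _ (ker_eq_bot.mpr (toSpanSingleton_prod_injective _ hb)),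
    ker_rowMap hab' ha, span_singleton_eq_range]

lemma ker_cliffordPsi (ha : a ≠ 0) (hb : b ≠ 0) (hba' : IsRelPrime b a') :
    ker (cliffordPsi a a' b b') = range (toSpanSingleton R (R × R) (b, a')) := by
  rw [cliffordPsi, ker_comp_of_ker_eq_bot _ (ker_eq_bot.mpr (toSpanSingleton_prod_injective _ ha)),
    ker_rowMap hba'.neg_left (neg_ne_zero.mpr hb), ← Prod.neg_mk, ← Set.neg_singleton,
    Submodule.span_neg, span_singleton_eq_range]

theorem nonempty_cliffordPhi_homology_equiv (ha : a ≠ 0) (hb : b ≠ 0) (hab' : IsRelPrime a b') :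
    Nonempty ((ker (cliffordPhi a a' b b') ⧸
        (range (cliffordPsi a a' b b')).comap (ker (cliffordPhi a a' b b')).subtype) ≃ₗ[R]
      R ⧸ Ideal.span {a', b}) := by
  refine ⟨(kerQuotRangeEquivOfFactor _ _ (rowMap a' (-b)) (toSpanSingleton_prod_injective _ ha)
    (ker_cliffordPhi ha hb hab').symm).trans (Submodule.quotEquivOfEq _ _ ?_)⟩
  rw [range_rowMap, Ideal.span_pair_neg]

theorem nonempty_cliffordPsi_homology_equiv (ha : a ≠ 0) (hb : b ≠ 0) (hba' : IsRelPrime b a') :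
    Nonempty ((ker (cliffordPsi a a' b b') ⧸
        (range (cliffordPhi a a' b b')).comap (ker (cliffordPsi a a' b b')).subtype) ≃ₗ[R]
      R ⧸ Ideal.span {b', a}) :=
  ⟨(kerQuotRangeEquivOfFactor _ _ (rowMap b' a) (toSpanSingleton_prod_injective _ hb)
    (ker_cliffordPsi ha hb hba').symm).trans (Submodule.quotEquivOfEq _ _ (range_rowMap b' a))⟩

end Clifford

section MonomialQuotient

variable {K : Type*} [Field K]

lemma isRelPrime_X_pow_X_pow {σ : Type*} {s t : σ} (hst : s ≠ t) (m n : ℕ) :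
    IsRelPrime (X s ^ m : MvPolynomial σ K) (X t ^ n) :=
  (X_prime.irreducible.isRelPrime_iff_not_dvd.mpr (mt X_dvd_X.mp hst)).pow

variable {R : Type*} [CommRing R]

noncomputable def biExponent (k l : ℕ) : Fin 2 →₀ ℕ := Finsupp.single 0 k + Finsupp.single 1 l

@[simp]
lemma biExponent_apply_zero (k l : ℕ) : biExponent k l 0 = k := by simp [biExponent]

@[simp]
lemma biExponent_apply_one (k l : ℕ) : biExponent k l 1 = l := by simp [biExponent]

lemma biExponent_eq_iff {k l k' l' : ℕ} : biExponent k l = biExponent k' l' ↔ k = k' ∧ l = l' :=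
  ⟨fun h => ⟨by simpa using DFunLike.congr_fun h 0, by simpa using DFunLike.congr_fun h 1⟩,
    fun ⟨hk, hl⟩ => hk ▸ hl ▸ rfl⟩

lemma biExponent_self (m : Fin 2 →₀ ℕ) : biExponent (m 0) (m 1) = m := by
  ext k
  fin_cases k <;> simp

variable (R) in
noncomputable def truncatedCoeff (a b : ℕ) : MvPolynomial (Fin 2) R →ₗ[R] (Fin a × Fin b → R) :=
  LinearMap.pi fun t => lcoeff R (biExponent t.1 t.2)

@[simp]
lemma truncatedCoeff_apply (a b : ℕ) (f : MvPolynomial (Fin 2) R) (t : Fin a × Fin b) :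
    truncatedCoeff R a b f t = coeff (biExponent t.1 t.2) f := rfl

variable (R) in
lemma truncatedCoeff_surjective (a b : ℕ) :
    Function.Surjective (truncatedCoeff R a b) := by
  intro g
  refine ⟨∑ t, monomial (biExponent t.1 t.2) (g t), funext fun t₀ => ?_⟩
  simp [coeff_sum, coeff_monomial, biExponent_eq_iff, Fin.val_inj, ← Prod.ext_iff]

lemma mem_span_X_pow_X_pow_iff {a b : ℕ} {f : MvPolynomial (Fin 2) R} :
    f ∈ Ideal.span {X 0 ^ a, X 1 ^ b} ↔ ∀ m ∈ f.support, a ≤ m 0 ∨ b ≤ m 1 := by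
  have : ({X 0 ^ a, X 1 ^ b} : Set (MvPolynomial (Fin 2) R)) =
      (fun s => monomial s 1) '' {Finsupp.single 0 a, Finsupp.single 1 b} := by
    simp [Set.image_pair, X_pow_eq_monomial]
  simp [this, mem_ideal_span_monomial_image, Finsupp.single_le_iff]

variable (R) in
lemma ker_truncatedCoeff (a b : ℕ) :
    ker (truncatedCoeff R a b) = (Ideal.span {X 0 ^ a, X 1 ^ b}).restrictScalars R := by
  ext f
  rw [Submodule.restrictScalars_mem, mem_span_X_pow_X_pow_iff, mem_ker, funext_iff]
  constructor
  · intro h m hm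
    by_contra! hlt
    simpa [biExponent_self, mem_support_iff.mp hm] using h (⟨m 0, hlt.1⟩, ⟨m 1, hlt.2⟩)
  · intro h t
    by_contra hne
    have := h _ (mem_support_iff.mpr hne)
    simp only [biExponent_apply_zero, biExponent_apply_one] at this
    omega

noncomputable def quotientSpanXPowXPowEquiv (a b : ℕ) :
    (MvPolynomial (Fin 2) R ⧸ Ideal.span {(X 0 : MvPolynomial (Fin 2) R) ^ a, X 1 ^ b}) ≃ₗ[R]
      (Fin a × Fin b → R) :=
  ((Submodule.Quotient.restrictScalarsEquiv R
    (Ideal.span {(X 0 : MvPolynomial (Fin 2) R) ^ a, X 1 ^ b})).symm.trans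
    (Submodule.quotEquivOfEq _ _ (ker_truncatedCoeff R a b).symm)).trans
    ((truncatedCoeff R a b).quotKerEquivOfSurjective (truncatedCoeff_surjective R a b))

lemma finite_quotient_span_X_pow_X_pow (a b : ℕ) :
    Module.Finite K
      (MvPolynomial (Fin 2) K ⧸ Ideal.span {(X 0 : MvPolynomial (Fin 2) K) ^ a, X 1 ^ b}) :=
  Module.Finite.equiv (quotientSpanXPowXPowEquiv a b).symm

lemma finrank_quotient_span_X_pow_X_pow (a b : ℕ) :
    Module.finrank K
      (MvPolynomial (Fin 2) K ⧸ Ideal.span {(X 0 : MvPolynomial (Fin 2) K) ^ a, X 1 ^ b}) =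
      a * b := by
  simp [(quotientSpanXPowXPowEquiv a b).finrank_eq]

end MonomialQuotient

section RunningExample

variable {d i j : ℕ}

lemma phiMap_eq_cliffordPhi (hi : i ≤ d) (hj : j ≤ d) :
    phiMap d i j = cliffordPhi (px ^ (d - i)) (px ^ i) (py ^ (d - j)) (py ^ j) := by
  refine LinearMap.ext fun z => ?_
  simp only [phiMap, cliffordPhi, ← pow_sub_mul_pow px hi, ← pow_sub_mul_pow py hj, coe_mk,
    AddHom.coe_mk, comp_apply, rowMap_apply, toSpanSingleton_apply, Prod.smul_mk, smul_eq_mul]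
  congr 1 <;> ring

lemma psiMap_eq_cliffordPsi (hi : i ≤ d) (hj : j ≤ d) :
    psiMap d i j = cliffordPsi (px ^ (d - i)) (px ^ i) (py ^ (d - j)) (py ^ j) := by
  refine LinearMap.ext fun z => ?_
  simp only [psiMap, cliffordPsi, ← pow_sub_mul_pow px hi, ← pow_sub_mul_pow py hj, coe_mk,
    AddHom.coe_mk, comp_apply, rowMap_apply, toSpanSingleton_apply, Prod.smul_mk, smul_eq_mul]
  congr 1 <;> ring

end RunningExample

theorem clifford_complex_running_example_general (d i j : ℕ) (hi : i ≤ d) (hj : j ≤ d) :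
    (phiMap d i j).comp (psiMap d i j) = 0 ∧ (psiMap d i j).comp (phiMap d i j) = 0 ∧
    Nonempty
      ((↥(LinearMap.ker (phiMap d i j)) ⧸
          (LinearMap.range (psiMap d i j)).comap (LinearMap.ker (phiMap d i j)).subtype)
        ≃ₗ[RPoly] (RPoly ⧸ Ideal.span {px ^ i, py ^ (d - j)})) ∧
    Nonempty
      ((↥(LinearMap.ker (psiMap d i j)) ⧸
          (LinearMap.range (phiMap d i j)).comap (LinearMap.ker (psiMap d i j)).subtype)
        ≃ₗ[RPoly] (RPoly ⧸ Ideal.span {py ^ j, px ^ (d - i)})) ∧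
    FiniteDimensional ℂ (RPoly ⧸ Ideal.span {px ^ i, py ^ (d - j)}) ∧
    Module.finrank ℂ (RPoly ⧸ Ideal.span {px ^ i, py ^ (d - j)}) = i * (d - j) ∧
    FiniteDimensional ℂ (RPoly ⧸ Ideal.span {py ^ j, px ^ (d - i)}) ∧
    Module.finrank ℂ (RPoly ⧸ Ideal.span {py ^ j, px ^ (d - i)}) = j * (d - i) := by
  have ha : px ^ (d - i) ≠ 0 := pow_ne_zero _ (X_ne_zero 0)
  have hb : py ^ (d - j) ≠ 0 := pow_ne_zero _ (X_ne_zero 1)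
  have hxy : ∀ m n, IsRelPrime (px ^ m) (py ^ n) := isRelPrime_X_pow_X_pow (by decide)
  rw [phiMap_eq_cliffordPhi hi hj, psiMap_eq_cliffordPsi hi hj]
  refine ⟨cliffordPhi_comp_cliffordPsi .., cliffordPsi_comp_cliffordPhi ..,
    nonempty_cliffordPhi_homology_equiv ha hb (hxy _ _),
    nonempty_cliffordPsi_homology_equiv ha hb (hxy _ _).symm,
    finite_quotient_span_X_pow_X_pow _ _, finrank_quotient_span_X_pow_X_pow _ _, ?_⟩
  rw [Ideal.span_pair_comm, mul_comm j]
  exact ⟨finite_quotient_span_X_pow_X_pow _ _, finrank_quotient_span_X_pow_X_pow _ _⟩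

/-- For `R = ℂ[x,y]`, `d ≥ 1`, `0 ≤ i,j ≤ d`: the maps `φ`, `ψ` compose to
zero both ways, `ker φ/im ψ ≅ R/(xⁱ, y^{d-j})` and `ker ψ/im φ ≅ R/(yʲ, x^{d-i})`, and these
quotients have `ℂ`-dimensions `i(d-j)` and `j(d-i)`. -/
theorem clifford_complex_running_example (d i j : ℕ) (hd : 1 ≤ d) (hi : i ≤ d) (hj : j ≤ d) :
    (phiMap d i j).comp (psiMap d i j) = 0 ∧ (psiMap d i j).comp (phiMap d i j) = 0 ∧
    Nonempty
      ((↥(LinearMap.ker (phiMap d i j)) ⧸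
          (LinearMap.range (psiMap d i j)).comap (LinearMap.ker (phiMap d i j)).subtype)
        ≃ₗ[RPoly] (RPoly ⧸ Ideal.span {px ^ i, py ^ (d - j)})) ∧
    Nonempty
      ((↥(LinearMap.ker (psiMap d i j)) ⧸
          (LinearMap.range (phiMap d i j)).comap (LinearMap.ker (psiMap d i j)).subtype)
        ≃ₗ[RPoly] (RPoly ⧸ Ideal.span {py ^ j, px ^ (d - i)})) ∧
    FiniteDimensional ℂ (RPoly ⧸ Ideal.span {px ^ i, py ^ (d - j)}) ∧
    Module.finrank ℂ (RPoly ⧸ Ideal.span {px ^ i, py ^ (d - j)}) = i * (d - j) ∧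
    FiniteDimensional ℂ (RPoly ⧸ Ideal.span {py ^ j, px ^ (d - i)}) ∧
    Module.finrank ℂ (RPoly ⧸ Ideal.span {py ^ j, px ^ (d - i)}) = j * (d - i) :=
  clifford_complex_running_example_general d i j hi hj
end
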